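/- Let |ψ_n⟩ = (|10...0⟩+|01...0⟩)/√2 and |GHZ_n⟩ = (|0...0⟩+|1...1⟩)/√2 be n-qubit states, and let ρ = p|ψ_n⟩⟨ψ_n| + (1−p)|GHZ_n⟩⟨GHZ_n| with 1/2 < p < 1. Then the two-qubit marginal ρ_{{1,2}} equals (p/2)(|01⟩+|10⟩)(⟨01|+⟨10|) + ((1−p)/2)|00⟩⟨00| + ((1−p)/2)|11⟩⟨11|, and this marginal has a negative partial transpose, hence is entangled. -/

import Mathlib

/-!
Tracing out qubits 3, …, n: `|ψ_n⟩ = |ψ⟩₁₂ ⊗ |0⋯0⟩` is a product vector, and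
`|GHZ_n⟩ = (|00⟩ ⊗ |0⋯0⟩ + |11⟩ ⊗ |1⋯1⟩)/√2` pairs `|00⟩` and `|11⟩` with orthogonal states of the
traced qubits as soon as there is one (`n ≥ 3`). This gives the marginal. In its partial transpose
the block on `span {|00⟩, |11⟩}` is `[[(1-p)/2, p/2], [p/2, (1-p)/2]]`, of determinant
`(1 - 2p)/4 < 0`, whereas the partial transpose of a separable state is a nonnegative combination of
the positive semidefinite matrices `A ⊗ Bᵀ`.
-/

open scoped Matrix ComplexOrder Kronecker

noncomputable section

namespace Stmt3

/-- `|ψ_n⟩ = (|10⋯0⟩ + |01⋯0⟩)/√2` as an `n`-qubit vector. -/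
def psiVec (n : ℕ) : (Fin n → Fin 2) → ℂ := fun f =>
  if f = (fun (i : Fin n) => if (i : ℕ) = 0 then (1 : Fin 2) else 0) ∨
     f = (fun (i : Fin n) => if (i : ℕ) = 1 then (1 : Fin 2) else 0) then
    ((Real.sqrt 2)⁻¹ : ℝ) else 0

/-- `|GHZ_n⟩ = (|0⋯0⟩ + |1⋯1⟩)/√2`. -/
def ghzVec (n : ℕ) : (Fin n → Fin 2) → ℂ := fun f =>
  if f = (fun _ => 0) ∨ f = (fun _ => 1) then ((Real.sqrt 2)⁻¹ : ℝ) else 0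

/-- Extend a two-qubit configuration on qubits `0, 1` by a configuration `h` on the
remaining qubits. -/
def ext (n : ℕ) (a : Fin 2 × Fin 2) (h : {i : Fin n // 1 < (i : ℕ)} → Fin 2) :
    Fin n → Fin 2 := fun i =>
  if h0 : (i : ℕ) = 0 then a.1
  else if h1 : (i : ℕ) = 1 then a.2
  else h ⟨i, by omega⟩

/-- The marginal `ρ_{{1,2}}` on the first two qubits (partial trace over qubits `3,…,n`). -/
def marg12 (n : ℕ) (ρ : Matrix (Fin n → Fin 2) (Fin n → Fin 2) ℂ) :
    Matrix (Fin 2 × Fin 2) (Fin 2 × Fin 2) ℂ :=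
  fun a c => ∑ h : {i : Fin n // 1 < (i : ℕ)} → Fin 2, ρ (ext n a h) (ext n c h)

/-- Partial transpose over the second qubit of a two-qubit matrix. -/
def pt (M : Matrix (Fin 2 × Fin 2) (Fin 2 × Fin 2) ℂ) :
    Matrix (Fin 2 × Fin 2) (Fin 2 × Fin 2) ℂ :=
  fun x y => M (x.1, y.2) (y.1, x.2)

/-- Separability of a two-qubit state. -/
def Sep2 (M : Matrix (Fin 2 × Fin 2) (Fin 2 × Fin 2) ℂ) : Prop :=
  ∃ (k : ℕ) (w : Fin k → ℝ) (A B : Fin k → Matrix (Fin 2) (Fin 2) ℂ),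
    (∀ j, 0 ≤ w j) ∧ (∀ j, (A j).PosSemidef ∧ (B j).PosSemidef) ∧
    M = ∑ j, (w j : ℂ) • (A j ⊗ₖ B j)

/-- `|01⟩ + |10⟩` (unnormalized). -/
def u : Fin 2 × Fin 2 → ℂ := fun x => if x = (0, 1) ∨ x = (1, 0) then 1 else 0

def v00 : Fin 2 × Fin 2 → ℂ := fun x => if x = (0, 0) then 1 else 0

def v11 : Fin 2 × Fin 2 → ℂ := fun x => if x = (1, 1) then 1 else 0

lemma pt_kronecker (A B : Matrix (Fin 2) (Fin 2) ℂ) : pt (A ⊗ₖ B) = A ⊗ₖ Bᵀ := by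
  ext ⟨x₁, x₂⟩ ⟨y₁, y₂⟩
  simp [pt, Matrix.kroneckerMap_apply]

lemma pt_sum {ι : Type*} (s : Finset ι) (M : ι → Matrix (Fin 2 × Fin 2) (Fin 2 × Fin 2) ℂ) :
    pt (∑ j ∈ s, M j) = ∑ j ∈ s, pt (M j) := by
  ext x y
  simp [pt, Matrix.sum_apply]

lemma pt_smul (c : ℂ) (M : Matrix (Fin 2 × Fin 2) (Fin 2 × Fin 2) ℂ) :
    pt (c • M) = c • pt M := rfl

theorem Sep2.posSemidef_pt {M : Matrix (Fin 2 × Fin 2) (Fin 2 × Fin 2) ℂ} (hM : Sep2 M) :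
    (pt M).PosSemidef := by
  obtain ⟨k, w, A, B, hw, hAB, rfl⟩ := hM
  rw [pt_sum]
  refine Matrix.posSemidef_sum _ fun j _ => ?_
  rw [pt_smul, pt_kronecker]
  exact ((hAB j).1.kronecker (hAB j).2.transpose).smul (by exact_mod_cast hw j)

def rho12 (p : ℝ) : Matrix (Fin 2 × Fin 2) (Fin 2 × Fin 2) ℂ :=
  ((p / 2 : ℝ) : ℂ) • Matrix.vecMulVec u (star u) +
    (((1 - p) / 2 : ℝ) : ℂ) • Matrix.vecMulVec v00 (star v00) +
    (((1 - p) / 2 : ℝ) : ℂ) • Matrix.vecMulVec v11 (star v11)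

lemma ofReal_sqrt_two_inv_mul_self :
    ((Real.sqrt 2 : ℝ) : ℂ)⁻¹ * ((Real.sqrt 2 : ℝ) : ℂ)⁻¹ = 2⁻¹ := by
  rw [← mul_inv, ← Complex.ofReal_mul, Real.mul_self_sqrt zero_le_two]
  norm_num

section Marginal

variable {n : ℕ}

lemma ext_apply_coe (a : Fin 2 × Fin 2) (h : {i : Fin n // 1 < (i : ℕ)} → Fin 2)
    (j : {i : Fin n // 1 < (i : ℕ)}) : ext n a h j = h j := by
  have := j.2
  simp only [ext]
  rw [dif_neg (by omega), dif_neg (by omega)]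

lemma ext_inj (hn : 2 ≤ n) {a b : Fin 2 × Fin 2} {h k : {i : Fin n // 1 < (i : ℕ)} → Fin 2} :
    ext n a h = ext n b k ↔ a = b ∧ h = k := by
  refine ⟨fun H => ⟨?_, funext fun j => ?_⟩, fun ⟨rfl, rfl⟩ => rfl⟩
  · have h₀ := congrFun H ⟨0, by omega⟩
    have h₁ := congrFun H ⟨1, by omega⟩
    simp only [ext] at h₀ h₁
    exact Prod.ext (by simpa using h₀) (by simpa using h₁)
  · simpa only [ext_apply_coe] using congrFun H j

lemma marg12_add (A B : Matrix (Fin n → Fin 2) (Fin n → Fin 2) ℂ) :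
    marg12 n (A + B) = marg12 n A + marg12 n B := by
  ext a c
  simp [marg12, Finset.sum_add_distrib]

lemma marg12_smul (r : ℂ) (A : Matrix (Fin n → Fin 2) (Fin n → Fin 2) ℂ) :
    marg12 n (r • A) = r • marg12 n A := by
  ext a c
  simp [marg12, Finset.mul_sum]

theorem marg12_vecMulVec_schmidt {ι : Type*} [Fintype ι] (x : (Fin n → Fin 2) → ℂ)
    (e : ι → {i : Fin n // 1 < (i : ℕ)} → Fin 2) (he : Function.Injective e)
    (y : ι → Fin 2 × Fin 2 → ℂ) (hx : ∀ a k, x (ext n a (e k)) = y k a)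
    (hx₀ : ∀ a h, h ∉ Set.range e → x (ext n a h) = 0) :
    marg12 n (Matrix.vecMulVec x (star x)) = ∑ k, Matrix.vecMulVec (y k) (star (y k)) := by
  ext a c
  simp only [marg12, Matrix.vecMulVec_apply, Matrix.sum_apply, Pi.star_apply]
  symm
  exact Fintype.sum_of_injective e he _ _ (fun h hh => by simp [hx₀ a h hh])
    (fun k => by simp [hx])

lemma psiVec_ext (hn : 2 ≤ n) (a : Fin 2 × Fin 2) (h : {i : Fin n // 1 < (i : ℕ)} → Fin 2) :
    psiVec n (ext n a h) = if h = (fun _ => 0) then ((Real.sqrt 2)⁻¹ : ℝ) * u a else 0 := by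
  have h₁₀ : (fun i : Fin n => if (i : ℕ) = 0 then (1 : Fin 2) else 0) =
      ext n (1, 0) (fun _ => 0) := by
    funext i; simp only [ext]; split_ifs <;> simp_all
  have h₀₁ : (fun i : Fin n => if (i : ℕ) = 1 then (1 : Fin 2) else 0) =
      ext n (0, 1) (fun _ => 0) := by
    funext i; simp only [ext]; split_ifs <;> simp_all
  simp only [psiVec, h₁₀, h₀₁, ext_inj hn]
  by_cases hh : h = fun _ => 0 <;> simp [hh, u, or_comm]

lemma ghzVec_ext (hn : 2 ≤ n) (a : Fin 2 × Fin 2) (h : {i : Fin n // 1 < (i : ℕ)} → Fin 2) :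
    ghzVec n (ext n a h) =
      if (a = (0, 0) ∧ h = fun _ => 0) ∨ (a = (1, 1) ∧ h = fun _ => 1) then
        (((Real.sqrt 2)⁻¹ : ℝ) : ℂ) else 0 := by
  have hb (b : Fin 2) : (fun _ : Fin n => b) = ext n (b, b) (fun _ => b) := by
    funext i; simp only [ext]; split_ifs <;> rfl
  simp only [ghzVec, hb 0, hb 1, ext_inj hn]

lemma marg12_psiVec (hn : 2 ≤ n) :
    marg12 n (Matrix.vecMulVec (psiVec n) (star (psiVec n))) =
      (1 / 2 : ℂ) • Matrix.vecMulVec u (star u) := by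
  rw [marg12_vecMulVec_schmidt (psiVec n) (fun (_ : Unit) _ => 0) (fun _ _ _ => rfl)
    (fun _ => (((Real.sqrt 2)⁻¹ : ℝ) : ℂ) • u)]
  · simp [Matrix.smul_vecMulVec, Matrix.vecMulVec_smul, smul_smul, ofReal_sqrt_two_inv_mul_self]
  · intro a k; simp [psiVec_ext hn]
  · intro a h hh; simp_all [psiVec_ext hn]

lemma marg12_ghzVec (hn : 3 ≤ n) :
    marg12 n (Matrix.vecMulVec (ghzVec n) (star (ghzVec n))) =
      (1 / 2 : ℂ) • (Matrix.vecMulVec v00 (star v00) + Matrix.vecMulVec v11 (star v11)) := by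
  have hinj : Function.Injective fun (b : Fin 2) (_ : {i : Fin n // 1 < (i : ℕ)}) => b :=
    fun b c hbc => congrFun hbc ⟨⟨2, by omega⟩, by simp⟩
  rw [marg12_vecMulVec_schmidt (ghzVec n) _ hinj
    ![(((Real.sqrt 2)⁻¹ : ℝ) : ℂ) • v00, (((Real.sqrt 2)⁻¹ : ℝ) : ℂ) • v11]]
  · simp [Matrix.smul_vecMulVec, Matrix.vecMulVec_smul, smul_smul, ofReal_sqrt_two_inv_mul_self]
  · intro a k
    fin_cases k <;> simp [ghzVec_ext (by omega : 2 ≤ n), v00, v11, hinj.ne]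
  · intro a h hh
    simp only [Set.mem_range, not_exists] at hh
    simp [ghzVec_ext (by omega : 2 ≤ n), Ne.symm (hh 0), Ne.symm (hh 1)]

lemma marg12_eq_rho12 (hn : 3 ≤ n) (p : ℝ) :
    marg12 n ((p : ℂ) • Matrix.vecMulVec (psiVec n) (star (psiVec n)) +
      ((1 - p : ℝ) : ℂ) • Matrix.vecMulVec (ghzVec n) (star (ghzVec n))) = rho12 p := by
  rw [marg12_add, marg12_smul, marg12_smul, marg12_psiVec (by omega), marg12_ghzVec hn, rho12]
  push_cast
  module

end Marginal

lemma not_posSemidef_pt_rho12 {p : ℝ} (hp : 1 / 2 < p) : ¬ (pt (rho12 p)).PosSemidef := by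
  intro h
  have hdet := (h.submatrix ![(0, 0), (1, 1)]).det_nonneg
  rw [Matrix.det_fin_two] at hdet
  have hdet' : p / 2 * (p / 2) ≤ (1 - p) / 2 * ((1 - p) / 2) := by
    rw [← Complex.real_le_real]
    simpa [pt, rho12, Matrix.vecMulVec_apply, u, v00, v11] using hdet
  nlinarith

theorem marginal_npt_entangled_general
    (n : ℕ) (hn : 3 ≤ n) (p : ℝ) (hp0 : 1 / 2 < p)
    (ρ : Matrix (Fin n → Fin 2) (Fin n → Fin 2) ℂ)
    (hρ : ρ = (p : ℂ) • Matrix.vecMulVec (psiVec n) (star (psiVec n)) +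
      ((1 - p : ℝ) : ℂ) • Matrix.vecMulVec (ghzVec n) (star (ghzVec n))) :
    marg12 n ρ = ((p / 2 : ℝ) : ℂ) • Matrix.vecMulVec u (star u) +
      (((1 - p) / 2 : ℝ) : ℂ) • Matrix.vecMulVec v00 (star v00) +
      (((1 - p) / 2 : ℝ) : ℂ) • Matrix.vecMulVec v11 (star v11) ∧
    ¬ (pt (marg12 n ρ)).PosSemidef ∧ ¬ Sep2 (marg12 n ρ) := by
  have hmarg : marg12 n ρ = rho12 p := hρ ▸ marg12_eq_rho12 hn p
  rw [hmarg]
  exact ⟨rfl, not_posSemidef_pt_rho12 hp0,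
    fun hsep => not_posSemidef_pt_rho12 hp0 hsep.posSemidef_pt⟩

/-- for `ρ = p|ψ_n⟩⟨ψ_n| + (1−p)|GHZ_n⟩⟨GHZ_n|` with `1/2 < p < 1`, the
two-qubit marginal `ρ_{{1,2}}` equals
`(p/2)(|01⟩+|10⟩)(⟨01|+⟨10|) + ((1−p)/2)|00⟩⟨00| + ((1−p)/2)|11⟩⟨11|`, its partial
transpose is not positive semidefinite (NPT), and hence it is entangled. -/
theorem marginal_npt_entangled
    (n : ℕ) (hn : 3 ≤ n) (p : ℝ) (hp0 : 1 / 2 < p) (hp1 : p < 1)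
    (ρ : Matrix (Fin n → Fin 2) (Fin n → Fin 2) ℂ)
    (hρ : ρ = (p : ℂ) • Matrix.vecMulVec (psiVec n) (star (psiVec n)) +
      ((1 - p : ℝ) : ℂ) • Matrix.vecMulVec (ghzVec n) (star (ghzVec n))) :
    marg12 n ρ = ((p / 2 : ℝ) : ℂ) • Matrix.vecMulVec u (star u) +
      (((1 - p) / 2 : ℝ) : ℂ) • Matrix.vecMulVec v00 (star v00) +
      (((1 - p) / 2 : ℝ) : ℂ) • Matrix.vecMulVec v11 (star v11) ∧
    ¬ (pt (marg12 n ρ)).PosSemidef ∧ ¬ Sep2 (marg12 n ρ) :=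
  marginal_npt_entangled_general n hn p hp0 ρ hρ

end Stmt3

end
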